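/- Let m > 0 and p ∈ ℝ³ with p ≠ 0. Set u₊(p) = √(½(1 + m/λ(p))), u₋(p) = √(½(1 − m/λ(p))), and U(p) = u₊(p)·I₄ + u₋(p)·β·(α·p)/|p|. Then U(p) is invertible with U(p)⁻¹ = u₊(p)·I₄ − u₋(p)·β·(α·p)/|p|, and U(p)·(α·p + mβ)·U(p)⁻¹ = λ(p)·β. -/

import Mathlib

open Matrix

noncomputable section

/-- `lam m p = √(|p|² + m²)`. -/
noncomputable def lam (m : ℝ) (p : EuclideanSpace ℝ (Fin 3)) : ℝ :=
  Real.sqrt (‖p‖ ^ 2 + m ^ 2)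

/-- The Pauli matrices. -/
def pauli : Fin 3 → Matrix (Fin 2) (Fin 2) ℂ
  | 0 => !![0, 1; 1, 0]
  | 1 => !![0, -Complex.I; Complex.I, 0]
  | 2 => !![1, 0; 0, -1]

/-- The Dirac matrix `β`. -/
def diracBeta : Matrix (Fin 4) (Fin 4) ℂ :=
  Matrix.reindex finSumFinEquiv finSumFinEquiv
    (Matrix.fromBlocks (1 : Matrix (Fin 2) (Fin 2) ℂ) 0 0 (-1 : Matrix (Fin 2) (Fin 2) ℂ))

/-- The Dirac matrices `αₖ`. -/
def diracAlpha (k : Fin 3) : Matrix (Fin 4) (Fin 4) ℂ :=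
  Matrix.reindex finSumFinEquiv finSumFinEquiv (Matrix.fromBlocks (0 : Matrix (Fin 2) (Fin 2) ℂ) (pauli k) (pauli k) (0 : Matrix (Fin 2) (Fin 2) ℂ))

/-- `α · v` for `v ∈ ℝ³`. -/
def alphaDot (v : EuclideanSpace ℝ (Fin 3)) : Matrix (Fin 4) (Fin 4) ℂ :=
  ∑ k, (v k : ℂ) • diracAlpha k

/-- The Dirac symbol `Ĥ(p) = α·p + mβ`. -/
def diracSymbol (m : ℝ) (p : EuclideanSpace ℝ (Fin 3)) : Matrix (Fin 4) (Fin 4) ℂ :=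
  alphaDot p + (m : ℂ) • diracBeta

/-- `Λ̂₊(p) = ½(I + (m/λ(p))β + (1/λ(p)) α·p)`. -/
def LambdaPlus (m : ℝ) (p : EuclideanSpace ℝ (Fin 3)) : Matrix (Fin 4) (Fin 4) ℂ :=
  (2 : ℂ)⁻¹ • (1 + ((m / lam m p : ℝ) : ℂ) • diracBeta + (((lam m p)⁻¹ : ℝ) : ℂ) • alphaDot p)

/-- `Λ̂₋(p) = ½(I − (m/λ(p))β − (1/λ(p)) α·p)`. -/
def LambdaMinus (m : ℝ) (p : EuclideanSpace ℝ (Fin 3)) : Matrix (Fin 4) (Fin 4) ℂ :=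
  (2 : ℂ)⁻¹ • (1 - ((m / lam m p : ℝ) : ℂ) • diracBeta - (((lam m p)⁻¹ : ℝ) : ℂ) • alphaDot p)

end

/-- `u₊(p) = √(½(1 + m/λ(p)))`. -/
noncomputable def uPlus (m : ℝ) (p : EuclideanSpace ℝ (Fin 3)) : ℝ :=
  Real.sqrt ((1 + m / lam m p) / 2)

/-- `u₋(p) = √(½(1 − m/λ(p)))`. -/
noncomputable def uMinus (m : ℝ) (p : EuclideanSpace ℝ (Fin 3)) : ℝ :=
  Real.sqrt ((1 - m / lam m p) / 2)

/-- `U(p) = u₊(p)·I₄ + u₋(p)·β·(α·p)/|p|`. -/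
noncomputable def Umatrix (m : ℝ) (p : EuclideanSpace ℝ (Fin 3)) : Matrix (Fin 4) (Fin 4) ℂ :=
  ((uPlus m p : ℝ) : ℂ) • 1 + ((uMinus m p / ‖p‖ : ℝ) : ℂ) • (diracBeta * alphaDot p)

/-- `u₊(p)·I₄ − u₋(p)·β·(α·p)/|p|`, the claimed inverse of `U(p)`. -/
noncomputable def UmatrixInv (m : ℝ) (p : EuclideanSpace ℝ (Fin 3)) : Matrix (Fin 4) (Fin 4) ℂ :=
  ((uPlus m p : ℝ) : ℂ) • 1 - ((uMinus m p / ‖p‖ : ℝ) : ℂ) • (diracBeta * alphaDot p)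

/-!
Write `H = α·p + mβ` and `K = β(α·p)`. From the Clifford relations `β² = 1`, `(α·p)β = -β(α·p)`
and `(α·p)² = |p|²` one gets `K² = -|p|²`, so `(s + tK)(s - tK) = s² + t²|p|²`, which is `1` for
`s = u₊`, `t = u₋/|p|`. Moreover `K` anticommutes with `H`, hence
`U H U⁻¹ = U² H = ((u₊² - u₋²) + 2u₊u₋ K/|p|) H = (m/λ) H + (1/λ)(|p|²β - m α·p) = λβ`.
-/

section Anticommuting

variable {𝕜 R : Type*} [CommRing 𝕜] [Ring R] [Algebra 𝕜 R]

theorem smul_one_add_smul_mul_smul_one_sub_smul {K : R} {w : 𝕜} (hK : K * K = -(w • 1))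
    (s t : 𝕜) : (s • 1 + t • K) * (s • 1 - t • K) = (s ^ 2 + t ^ 2 * w) • 1 := by
  simp only [add_mul, mul_sub, smul_mul_smul_comm, mul_one, one_mul, hK, smul_neg, smul_smul]
  module

theorem smul_one_sub_smul_mul_smul_one_add_smul {K : R} {w : 𝕜} (hK : K * K = -(w • 1))
    (s t : 𝕜) : (s • 1 - t • K) * (s • 1 + t • K) = (s ^ 2 + t ^ 2 * w) • 1 := by
  simpa [sub_eq_add_neg, neg_smul] using smul_one_add_smul_mul_smul_one_sub_smul hK s (-t)

variable {A B : R} {w : 𝕜}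

theorem mul_mul_mul_self_of_anticomm (hB : B * B = 1) (hAB : A * B = -(B * A))
    (hA : A * A = w • 1) : B * A * (B * A) = -(w • 1) :=
  calc B * A * (B * A) = B * (A * B) * A := by noncomm_ring
    _ = -(B * B * (A * A)) := by rw [hAB]; noncomm_ring
    _ = -(w • 1) := by rw [hB, hA, one_mul]

theorem conj_add_smul_of_anticomm (hB : B * B = 1) (hAB : A * B = -(B * A))
    (hA : A * A = w • 1) (s t c : 𝕜) :
    (s • 1 + t • (B * A)) * (A + c • B) * (s • 1 - t • (B * A)) =
      (s ^ 2 - t ^ 2 * w - 2 * s * t * c) • A + (c * (s ^ 2 - t ^ 2 * w) + 2 * s * t * w) • B := by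
  have hK2 := mul_mul_mul_self_of_anticomm hB hAB hA
  have hKH : B * A * (A + c • B) = w • B - c • A := by
    rw [mul_add, mul_smul_comm, mul_assoc, hA, mul_smul_one, mul_assoc, hAB, mul_neg,
      ← mul_assoc, hB, one_mul, smul_neg, sub_eq_add_neg]
  have hHK : (A + c • B) * (B * A) = -(B * A * (A + c • B)) := by
    rw [hKH, add_mul, smul_mul_assoc, ← mul_assoc, hAB, neg_mul, mul_assoc, hA, mul_smul_one,
      ← mul_assoc, hB, one_mul]
    abel
  have hswap : (A + c • B) * (s • 1 - t • (B * A)) = (s • 1 + t • (B * A)) * (A + c • B) := by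
    simp only [mul_sub, add_mul, mul_smul_comm, smul_mul_assoc, mul_one, one_mul, hHK, smul_neg,
      sub_neg_eq_add]
  have hU2 : (s • 1 + t • (B * A)) * (s • 1 + t • (B * A)) =
      (s ^ 2 - t ^ 2 * w) • 1 + (2 * s * t) • (B * A) := by
    simp only [add_mul, mul_add, smul_mul_smul_comm, mul_one, one_mul, hK2, smul_neg]
    module
  calc (s • 1 + t • (B * A)) * (A + c • B) * (s • 1 - t • (B * A))
      = (s • 1 + t • (B * A)) * (s • 1 + t • (B * A)) * (A + c • B) := by
        rw [mul_assoc, hswap, ← mul_assoc]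
    _ = _ := by
        rw [hU2, add_mul, smul_mul_assoc, one_mul, smul_mul_assoc, hKH]
        module

end Anticommuting

def pauliDot (v : EuclideanSpace ℝ (Fin 3)) : Matrix (Fin 2) (Fin 2) ℂ :=
  ∑ k, (v k : ℂ) • pauli k

theorem pauliDot_mul_self (v : EuclideanSpace ℝ (Fin 3)) :
    pauliDot v * pauliDot v = ‖v‖ ^ 2 • (1 : Matrix (Fin 2) (Fin 2) ℂ) := by
  have hv : ((‖v‖ ^ 2 : ℝ) : ℂ) = (v 0 : ℂ) ^ 2 + (v 1 : ℂ) ^ 2 + (v 2 : ℂ) ^ 2 := by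
    simp [EuclideanSpace.norm_sq_eq, Fin.sum_univ_three]
  rw [← Complex.coe_smul, hv]
  ext i j
  fin_cases i <;> fin_cases j <;>
    simp [pauliDot, pauli, Fin.sum_univ_three, Matrix.mul_apply, Fin.sum_univ_two] <;>
    grind [Complex.I_sq]

local notation "toDirac" => reindexAlgEquiv ℝ ℂ (finSumFinEquiv : Fin 2 ⊕ Fin 2 ≃ Fin 4)

theorem diracBeta_eq_fromBlocks : diracBeta = toDirac (fromBlocks 1 0 0 (-1)) := rfl

theorem alphaDot_eq_fromBlocks (v : EuclideanSpace ℝ (Fin 3)) :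
    alphaDot v = toDirac (fromBlocks 0 (pauliDot v) (pauliDot v) 0) := by
  simp only [alphaDot, diracAlpha, pauliDot, Fin.sum_univ_three, Complex.coe_smul,
    ← coe_reindexAlgEquiv ℝ, ← map_smul, ← map_add, fromBlocks_smul, fromBlocks_add, smul_zero,
    add_zero]

theorem diracBeta_mul_self : diracBeta * diracBeta = 1 := by
  rw [diracBeta_eq_fromBlocks, ← map_mul, fromBlocks_multiply]
  simp

theorem alphaDot_mul_diracBeta (v : EuclideanSpace ℝ (Fin 3)) :
    alphaDot v * diracBeta = -(diracBeta * alphaDot v) := by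
  rw [diracBeta_eq_fromBlocks, alphaDot_eq_fromBlocks, ← map_mul, ← map_mul, ← map_neg,
    fromBlocks_multiply, fromBlocks_multiply, fromBlocks_neg]
  simp

theorem alphaDot_mul_self (v : EuclideanSpace ℝ (Fin 3)) :
    alphaDot v * alphaDot v = ‖v‖ ^ 2 • (1 : Matrix (Fin 4) (Fin 4) ℂ) := by
  rw [alphaDot_eq_fromBlocks, ← map_mul, fromBlocks_multiply]
  simp only [pauliDot_mul_self, zero_mul, mul_zero, add_zero, zero_add]
  rw [← smul_zero (‖v‖ ^ 2), ← fromBlocks_smul, fromBlocks_one, map_smul, map_one]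

section Coefficients

variable (m : ℝ) (p : EuclideanSpace ℝ (Fin 3))

theorem lam_sq : lam m p ^ 2 = ‖p‖ ^ 2 + m ^ 2 := Real.sq_sqrt (by positivity)

theorem lam_pos {p : EuclideanSpace ℝ (Fin 3)} (hp : p ≠ 0) : 0 < lam m p :=
  Real.sqrt_pos.mpr (by have := norm_pos_iff.mpr hp; positivity)

theorem lam_nonneg : 0 ≤ lam m p := Real.sqrt_nonneg _

theorem abs_div_lam_le_one : |m / lam m p| ≤ 1 := by
  rw [abs_div, abs_of_nonneg (lam_nonneg m p)]
  exact div_le_one_of_le₀ (Real.abs_le_sqrt (by nlinarith [sq_nonneg ‖p‖])) (lam_nonneg m p)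

theorem uPlus_sq : uPlus m p ^ 2 = (1 + m / lam m p) / 2 :=
  Real.sq_sqrt (by linarith [neg_abs_le (m / lam m p), abs_div_lam_le_one m p])

theorem uMinus_sq : uMinus m p ^ 2 = (1 - m / lam m p) / 2 :=
  Real.sq_sqrt (by linarith [le_abs_self (m / lam m p), abs_div_lam_le_one m p])

theorem two_mul_uPlus_mul_uMinus {m : ℝ} {p : EuclideanSpace ℝ (Fin 3)} (h : 0 < lam m p) :
    2 * uPlus m p * uMinus m p = ‖p‖ / lam m p := by
  refine (sq_eq_sq₀ (by unfold uPlus uMinus; positivity) (by positivity)).mp ?_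
  rw [mul_pow, mul_pow, uPlus_sq, uMinus_sq, div_pow]
  field_simp
  linear_combination lam_sq m p

end Coefficients

theorem U_diagonalizes_dirac_symbol_general (m : ℝ)
    (p : EuclideanSpace ℝ (Fin 3)) (hp : p ≠ 0) :
    Umatrix m p * UmatrixInv m p = 1 ∧
    UmatrixInv m p * Umatrix m p = 1 ∧
    Umatrix m p * diracSymbol m p * UmatrixInv m p = ((lam m p : ℝ) : ℂ) • diracBeta := by
  have hlam : 0 < lam m p := lam_pos m hp
  have hw : (uMinus m p / ‖p‖) ^ 2 * ‖p‖ ^ 2 = uMinus m p ^ 2 := by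
    field_simp [norm_ne_zero_iff.mpr hp]
  have hst : 2 * uPlus m p * (uMinus m p / ‖p‖) = (lam m p)⁻¹ := by
    rw [← mul_div_assoc, two_mul_uPlus_mul_uMinus hlam]
    field_simp [norm_ne_zero_iff.mpr hp]
  have hunit : uPlus m p ^ 2 + (uMinus m p / ‖p‖) ^ 2 * ‖p‖ ^ 2 = 1 := by
    rw [hw, uPlus_sq, uMinus_sq]; ring
  have hK2 := mul_mul_mul_self_of_anticomm diracBeta_mul_self (alphaDot_mul_diracBeta p)
    (alphaDot_mul_self p)
  simp only [Umatrix, UmatrixInv, diracSymbol, Complex.coe_smul]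
  refine ⟨?_, ?_, ?_⟩
  · rw [smul_one_add_smul_mul_smul_one_sub_smul hK2, hunit, one_smul]
  · rw [smul_one_sub_smul_mul_smul_one_add_smul hK2, hunit, one_smul]
  · rw [conj_add_smul_of_anticomm diracBeta_mul_self (alphaDot_mul_diracBeta p)
      (alphaDot_mul_self p), hw, hst, uPlus_sq, uMinus_sq]
    have hα : (1 + m / lam m p) / 2 - (1 - m / lam m p) / 2 - (lam m p)⁻¹ * m = 0 := by ring
    have hβ : m * ((1 + m / lam m p) / 2 - (1 - m / lam m p) / 2) + (lam m p)⁻¹ * ‖p‖ ^ 2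
        = lam m p := by
      field_simp
      linear_combination -2 * lam_sq m p
    rw [hα, hβ, zero_smul, zero_add]

/-- For `m > 0` and `p ≠ 0`, the matrix `U(p)` is invertible, its inverse is
`u₊(p)·I₄ − u₋(p)·β·(α·p)/|p|`, and `U(p)·(α·p + mβ)·U(p)⁻¹ = λ(p)·β`. -/
theorem U_diagonalizes_dirac_symbol (m : ℝ) (hm : 0 < m)
    (p : EuclideanSpace ℝ (Fin 3)) (hp : p ≠ 0) :
    Umatrix m p * UmatrixInv m p = 1 ∧
    UmatrixInv m p * Umatrix m p = 1 ∧
    Umatrix m p * diracSymbol m p * UmatrixInv m p = ((lam m p : ℝ) : ℂ) • diracBeta :=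
  U_diagonalizes_dirac_symbol_general m p hp
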